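/- For any seminormal quasi-crystal Q of type Φ, the free ⊗-quasi-crystal monoid F^⊗(Q) is a ⊗-quasi-crystal monoid of type Φ; moreover its weight map satisfies wt(x₁x₂⋯x_m) = wt(x₁) + wt(x₂) + ⋯ + wt(x_m) for all letters x₁, …, x_m ∈ Q. -/

import Mathlib

/-! ## Root system setting -/

/-- The data of a root system `Φ` in a Euclidean space `V`, together with a choice of
simple roots `(α_i)_{i ∈ ι}` and a weight lattice `Λ`, with the integer-valued coroot
pairing `pair λ i = ⟨λ, α_i^∨⟩ = 2⟪λ, α_i⟫/⟪α_i, α_i⟫` on the weight lattice. -/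
structure QCSetting (V : Type*) [NormedAddCommGroup V] [InnerProductSpace ℝ V]
    (ι : Type*) where
  Φ : Set V
  finite : Φ.Finite
  nonempty : Φ.Nonempty
  zero_not_mem : (0 : V) ∉ Φ
  reflect_mem : ∀ a ∈ Φ, ∀ b ∈ Φ, b - (2 * (inner ℝ b a : ℝ) / (inner ℝ a a : ℝ)) • a ∈ Φ
  smul_root : ∀ a ∈ Φ, ∀ k : ℝ, k • a ∈ Φ → k = 1 ∨ k = -1
  simple : ι → V
  simple_mem : ∀ i, simple i ∈ Φ
  simple_indep : LinearIndependent ℝ simple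
  Λ : AddSubgroup V
  lattice_spans : Submodule.span ℝ (Λ : Set V) = ⊤
  root_mem_lattice : ∀ a ∈ Φ, a ∈ Λ
  pair : Λ → ι → ℤ
  pair_spec : ∀ (v : Λ) (i : ι),
    (pair v i : ℝ) = 2 * (inner ℝ (v : V) (simple i) : ℝ) / (inner ℝ (simple i) (simple i) : ℝ)

variable {V : Type*} [NormedAddCommGroup V] [InnerProductSpace ℝ V] {ι : Type*}

/-! ## Quasi-crystals -/

/-- The structure maps of a quasi-crystal of type `S` on an underlying set `Q`:
a weight map `wt` with values in the weight lattice, partial quasi-Kashiwara operators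
`e i, f i : Q → Q ⊔ {⊥}` (realized as `Option`-valued maps, `none` playing the role
of `⊥`), and maps `ε i, φ i : Q → ℤ ∪ {+∞}` (realized as `WithTop ℤ`). -/
structure QC (S : QCSetting V ι) (Q : Type*) where
  wt : Q → S.Λ
  e : ι → Q → Option Q
  f : ι → Q → Option Q
  ε : ι → Q → WithTop ℤ
  φ : ι → Q → WithTop ℤ

/-- `k`-fold iteration of a partial map `g : Q → Option Q` starting at `x`. -/
def optIter {Q : Type*} (g : Q → Option Q) (k : ℕ) (x : Q) : Option Q :=
  (fun o => o.bind g)^[k] (some x)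

/-- The axioms of a seminormal quasi-crystal. -/
structure QC.IsSeminormal {S : QCSetting V ι} {Q : Type*} (𝒬 : QC S Q) : Prop where
  phi_eq : ∀ i x, 𝒬.φ i x = 𝒬.ε i x + ((S.pair (𝒬.wt x) i : ℤ) : WithTop ℤ)
  wt_e : ∀ i x y, 𝒬.e i x = some y → (𝒬.wt y : V) = (𝒬.wt x : V) + S.simple i
  wt_f : ∀ i x y, 𝒬.f i x = some y → (𝒬.wt y : V) = (𝒬.wt x : V) - S.simple i
  e_iff_f : ∀ i x y, 𝒬.e i x = some y ↔ 𝒬.f i y = some x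
  e_of_top : ∀ i x, 𝒬.ε i x = ⊤ → 𝒬.e i x = none
  f_of_top : ∀ i x, 𝒬.ε i x = ⊤ → 𝒬.f i x = none
  eps_spec : ∀ i x, 𝒬.ε i x ≠ ⊤ → ∃ n : ℕ, 𝒬.ε i x = ((n : ℤ) : WithTop ℤ) ∧
    IsGreatest {k : ℕ | (optIter (𝒬.e i) k x).isSome} n
  phi_spec : ∀ i x, 𝒬.ε i x ≠ ⊤ → ∃ n : ℕ, 𝒬.φ i x = ((n : ℤ) : WithTop ℤ) ∧
    IsGreatest {k : ℕ | (optIter (𝒬.f i) k x).isSome} n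

/-- A seminormal crystal is a seminormal quasi-crystal in which `ε i x ≠ +∞` always. -/
def QC.IsSeminormalCrystal {S : QCSetting V ι} {Q : Type*} (𝒬 : QC S Q) : Prop :=
  𝒬.IsSeminormal ∧ ∀ i x, 𝒬.ε i x ≠ ⊤

noncomputable section

/-! ## Tensor product -/

/-- The tensor product of two quasi-crystals of the same type. -/
def QC.tensor {S : QCSetting V ι} {Q Q' : Type*} (𝒬 : QC S Q) (𝒬' : QC S Q') :
    QC S (Q × Q') where
  wt p := 𝒬.wt p.1 + 𝒬'.wt p.2
  ε i p := max (𝒬.ε i p.1) (𝒬'.ε i p.2 + ((-(S.pair (𝒬.wt p.1) i) : ℤ) : WithTop ℤ))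
  φ i p := max (𝒬.φ i p.1 + ((S.pair (𝒬'.wt p.2) i : ℤ) : WithTop ℤ)) (𝒬'.φ i p.2)
  e i p := if 𝒬'.ε i p.2 ≤ 𝒬.φ i p.1
    then (𝒬.e i p.1).map (fun y => (y, p.2))
    else (𝒬'.e i p.2).map (fun y => (p.1, y))
  f i p := if 𝒬'.ε i p.2 < 𝒬.φ i p.1
    then (𝒬.f i p.1).map (fun y => (y, p.2))
    else (𝒬'.f i p.2).map (fun y => (p.1, y))

/-! ## Quasi-tensor product -/

/-- The (inverse-free) quasi-tensor product of two quasi-crystals of the same type. -/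
def QC.qtensor {S : QCSetting V ι} {Q Q' : Type*} (𝒬 : QC S Q) (𝒬' : QC S Q') :
    QC S (Q × Q') where
  wt p := 𝒬.wt p.1 + 𝒬'.wt p.2
  ε i p := if 0 < 𝒬.φ i p.1 ∧ 0 < 𝒬'.ε i p.2 then ⊤
    else max (𝒬.ε i p.1) (𝒬'.ε i p.2 + ((-(S.pair (𝒬.wt p.1) i) : ℤ) : WithTop ℤ))
  φ i p := if 0 < 𝒬.φ i p.1 ∧ 0 < 𝒬'.ε i p.2 then ⊤
    else max (𝒬.φ i p.1 + ((S.pair (𝒬'.wt p.2) i : ℤ) : WithTop ℤ)) (𝒬'.φ i p.2)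
  e i p := if 0 < 𝒬.φ i p.1 ∧ 0 < 𝒬'.ε i p.2 then none
    else if 𝒬'.ε i p.2 ≤ 𝒬.φ i p.1 then (𝒬.e i p.1).map (fun y => (y, p.2))
    else (𝒬'.e i p.2).map (fun y => (p.1, y))
  f i p := if 0 < 𝒬.φ i p.1 ∧ 0 < 𝒬'.ε i p.2 then none
    else if 𝒬'.ε i p.2 < 𝒬.φ i p.1 then (𝒬.f i p.1).map (fun y => (y, p.2))
    else (𝒬'.f i p.2).map (fun y => (p.1, y))

/-! ## Homomorphisms -/

/-- A quasi-crystal homomorphism `ψ : 𝒬 → 𝒬'`, i.e. a map `Q ⊔ {⊥} → Q' ⊔ {⊥}`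
(realized on `Option`s, `none` playing the role of `⊥`) compatible with the structure
maps in the appropriate sense. -/
structure QCHom {S : QCSetting V ι} {Q Q' : Type*} (𝒬 : QC S Q) (𝒬' : QC S Q') where
  toFun : Option Q → Option Q'
  map_none : toFun none = none
  wt_eq : ∀ x y, toFun (some x) = some y → 𝒬'.wt y = 𝒬.wt x
  eps_eq : ∀ i x y, toFun (some x) = some y → 𝒬'.ε i y = 𝒬.ε i x
  phi_eq : ∀ i x y, toFun (some x) = some y → 𝒬'.φ i y = 𝒬.φ i x
  comm_e : ∀ i x x' y y', 𝒬.e i x = some x' → toFun (some x) = some y →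
    toFun (some x') = some y' → 𝒬'.e i y = some y'
  comm_f : ∀ i x x' y y', 𝒬.f i x = some x' → toFun (some x) = some y →
    toFun (some x') = some y' → 𝒬'.f i y = some y'

/-! ## The free `⊗`-quasi-crystal monoid -/

/-- Weight of a word: the sum of the weights of its letters. -/
def freeWt {S : QCSetting V ι} {Q : Type*} (𝒬 : QC S Q) : List Q → S.Λ
  | [] => 0
  | x :: w => 𝒬.wt x + freeWt 𝒬 w

/-- The map `ε̈_i` of the free `⊗`-quasi-crystal monoid. -/
def freeEps {S : QCSetting V ι} {Q : Type*} (𝒬 : QC S Q) (i : ι) : List Q → WithTop ℤ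
  | [] => 0
  | x :: w => max (𝒬.ε i x) (freeEps 𝒬 i w + ((-(S.pair (𝒬.wt x) i) : ℤ) : WithTop ℤ))

/-- The map `φ̈_i` of the free `⊗`-quasi-crystal monoid. -/
def freePhi {S : QCSetting V ι} {Q : Type*} (𝒬 : QC S Q) (i : ι) : List Q → WithTop ℤ
  | [] => 0
  | x :: w => max (𝒬.φ i x + ((S.pair (freeWt 𝒬 w) i : ℤ) : WithTop ℤ)) (freePhi 𝒬 i w)

/-- The operator `ë_i` of the free `⊗`-quasi-crystal monoid. -/
def freeE {S : QCSetting V ι} {Q : Type*} (𝒬 : QC S Q) (i : ι) : List Q → Option (List Q)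
  | [] => none
  | x :: w => if freeEps 𝒬 i w ≤ 𝒬.φ i x
      then (𝒬.e i x).map (· :: w)
      else (freeE 𝒬 i w).map (x :: ·)

/-- The operator `f̈_i` of the free `⊗`-quasi-crystal monoid. -/
def freeF {S : QCSetting V ι} {Q : Type*} (𝒬 : QC S Q) (i : ι) : List Q → Option (List Q)
  | [] => none
  | x :: w => if freeEps 𝒬 i w < 𝒬.φ i x
      then (𝒬.f i x).map (· :: w)
      else (freeF 𝒬 i w).map (x :: ·)

/-- The quasi-crystal structure of the free `⊗`-quasi-crystal monoid `F^⊗(𝒬)`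
on the free monoid `Q*`. -/
def freeTensorQC {S : QCSetting V ι} {Q : Type*} (𝒬 : QC S Q) : QC S (FreeMonoid Q) where
  wt w := freeWt 𝒬 (FreeMonoid.toList w)
  ε i w := freeEps 𝒬 i (FreeMonoid.toList w)
  φ i w := freePhi 𝒬 i (FreeMonoid.toList w)
  e i w := (freeE 𝒬 i (FreeMonoid.toList w)).map (fun l => FreeMonoid.ofList l)
  f i w := (freeF 𝒬 i (FreeMonoid.toList w)).map (fun l => FreeMonoid.ofList l)

/-! ## The free `⊗̈`-quasi-crystal monoid -/

/-- The map `ε̈_i` of the free `⊗̈`-quasi-crystal monoid. -/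
def qfreeEps {S : QCSetting V ι} {Q : Type*} (𝒬 : QC S Q) (i : ι) : List Q → WithTop ℤ
  | [] => 0
  | x :: w => if 0 < 𝒬.φ i x ∧ 0 < qfreeEps 𝒬 i w then ⊤
      else max (𝒬.ε i x) (qfreeEps 𝒬 i w + ((-(S.pair (𝒬.wt x) i) : ℤ) : WithTop ℤ))

/-- The map `φ̈_i` of the free `⊗̈`-quasi-crystal monoid. -/
def qfreePhi {S : QCSetting V ι} {Q : Type*} (𝒬 : QC S Q) (i : ι) : List Q → WithTop ℤ
  | [] => 0
  | x :: w => if 0 < 𝒬.φ i x ∧ 0 < qfreeEps 𝒬 i w then ⊤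
      else max (𝒬.φ i x + ((S.pair (freeWt 𝒬 w) i : ℤ) : WithTop ℤ)) (qfreePhi 𝒬 i w)

/-- The operator `ë_i` of the free `⊗̈`-quasi-crystal monoid. -/
def qfreeE {S : QCSetting V ι} {Q : Type*} (𝒬 : QC S Q) (i : ι) : List Q → Option (List Q)
  | [] => none
  | x :: w => if 0 < 𝒬.φ i x ∧ 0 < qfreeEps 𝒬 i w then none
      else if qfreeEps 𝒬 i w ≤ 𝒬.φ i x then (𝒬.e i x).map (· :: w)
      else (qfreeE 𝒬 i w).map (x :: ·)

/-- The operator `f̈_i` of the free `⊗̈`-quasi-crystal monoid. -/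
def qfreeF {S : QCSetting V ι} {Q : Type*} (𝒬 : QC S Q) (i : ι) : List Q → Option (List Q)
  | [] => none
  | x :: w => if 0 < 𝒬.φ i x ∧ 0 < qfreeEps 𝒬 i w then none
      else if qfreeEps 𝒬 i w < 𝒬.φ i x then (𝒬.f i x).map (· :: w)
      else (qfreeF 𝒬 i w).map (x :: ·)

/-- The quasi-crystal structure of the free `⊗̈`-quasi-crystal monoid `F^⊗̈(𝒬)`
on the free monoid `Q*`. -/
def freeQTensorQC {S : QCSetting V ι} {Q : Type*} (𝒬 : QC S Q) : QC S (FreeMonoid Q) where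
  wt w := freeWt 𝒬 (FreeMonoid.toList w)
  ε i w := qfreeEps 𝒬 i (FreeMonoid.toList w)
  φ i w := qfreePhi 𝒬 i (FreeMonoid.toList w)
  e i w := (qfreeE 𝒬 i (FreeMonoid.toList w)).map (fun l => FreeMonoid.ofList l)
  f i w := (qfreeF 𝒬 i (FreeMonoid.toList w)).map (fun l => FreeMonoid.ofList l)

/-! ## Connected components, plactic and hypoplactic congruences -/

/-- Two elements are connected in the quasi-crystal graph if they are related by the
reflexive-symmetric-transitive closure of the edge relation given by the
quasi-Kashiwara operators. -/
def QC.conn {S : QCSetting V ι} {Q : Type*} (𝒬 : QC S Q) : Q → Q → Prop :=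
  Relation.EqvGen (fun x y => ∃ i, 𝒬.f i x = some y ∨ 𝒬.f i y = some x ∨
    𝒬.e i x = some y ∨ 𝒬.e i y = some x)

/-- The connected component `𝒬(x)` of a quasi-crystal `𝒬` containing `x`, as a
quasi-crystal on the subtype of elements connected with `x`. -/
def QC.compQC {S : QCSetting V ι} {Q : Type*} (𝒬 : QC S Q) (x : Q) :
    QC S {y : Q // 𝒬.conn x y} where
  wt y := 𝒬.wt y.1
  ε i y := 𝒬.ε i y.1
  φ i y := 𝒬.φ i y.1
  e i y := (𝒬.e i y.1).pmap (fun z hz => (⟨z, hz⟩ : {y : Q // 𝒬.conn x y}))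
    (fun z hz => Relation.EqvGen.trans _ _ _ y.2
      (Relation.EqvGen.rel _ _ ⟨i, Or.inr (Or.inr (Or.inl hz))⟩))
  f i y := (𝒬.f i y.1).pmap (fun z hz => (⟨z, hz⟩ : {y : Q // 𝒬.conn x y}))
    (fun z hz => Relation.EqvGen.trans _ _ _ y.2
      (Relation.EqvGen.rel _ _ ⟨i, Or.inl hz⟩))

/-- The plactic congruence: `u ≈ v` iff there is a quasi-crystal isomorphism between the
connected components of `u` and `v` in `F^⊗(𝒬)` mapping `u` to `v`. -/
def placticRel {S : QCSetting V ι} {Q : Type*} (𝒬 : QC S Q)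
    (u v : FreeMonoid Q) : Prop :=
  ∃ ψ : QCHom ((freeTensorQC 𝒬).compQC u) ((freeTensorQC 𝒬).compQC v),
    Function.Bijective ψ.toFun ∧
    ψ.toFun (some ⟨u, Relation.EqvGen.refl u⟩) = some ⟨v, Relation.EqvGen.refl v⟩

/-- The hypoplactic congruence: `u ∼̈ v` iff there is a quasi-crystal isomorphism between
the connected components of `u` and `v` in `F^⊗̈(𝒬)` mapping `u` to `v`. -/
def hypoRel {S : QCSetting V ι} {Q : Type*} (𝒬 : QC S Q)
    (u v : FreeMonoid Q) : Prop :=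
  ∃ ψ : QCHom ((freeQTensorQC 𝒬).compQC u) ((freeQTensorQC 𝒬).compQC v),
    Function.Bijective ψ.toFun ∧
    ψ.toFun (some ⟨u, Relation.EqvGen.refl u⟩) = some ⟨v, Relation.EqvGen.refl v⟩

/-! ## Quasi-crystal monoids -/

/-- A monoid is equidivisible if whenever `x₁y₁ = x₂y₂` one of the factorizations
refines the other. -/
def Equidivisible (M : Type*) [Monoid M] : Prop :=
  ∀ x₁ x₂ y₁ y₂ : M, x₁ * y₁ = x₂ * y₂ →
    ∃ z : M, (x₂ = x₁ * z ∧ y₁ = z * y₂) ∨ (x₁ = x₂ * z ∧ y₂ = z * y₁)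

/-- A `⊗`-quasi-crystal monoid: a seminormal quasi-crystal structure on a monoid whose
structure maps interact with the multiplication by the tensor-product rules. -/
structure IsTensorQCMon {S : QCSetting V ι} {M : Type*} [Monoid M] (𝒬 : QC S M) : Prop where
  seminormal : 𝒬.IsSeminormal
  wt_mul : ∀ x y, 𝒬.wt (x * y) = 𝒬.wt x + 𝒬.wt y
  eps_mul : ∀ i x y, 𝒬.ε i (x * y) =
    max (𝒬.ε i x) (𝒬.ε i y + ((-(S.pair (𝒬.wt x) i) : ℤ) : WithTop ℤ))
  phi_mul : ∀ i x y, 𝒬.φ i (x * y) =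
    max (𝒬.φ i x + ((S.pair (𝒬.wt y) i : ℤ) : WithTop ℤ)) (𝒬.φ i y)
  e_mul : ∀ i x y, 𝒬.e i (x * y) =
    if 𝒬.ε i y ≤ 𝒬.φ i x then (𝒬.e i x).map (· * y) else (𝒬.e i y).map (x * ·)
  f_mul : ∀ i x y, 𝒬.f i (x * y) =
    if 𝒬.ε i y < 𝒬.φ i x then (𝒬.f i x).map (· * y) else (𝒬.f i y).map (x * ·)

/-- A `⊗̈`-quasi-crystal monoid: a seminormal quasi-crystal structure on a monoid such
that `x ⊗̈ y ↦ x·y` induces a quasi-crystal homomorphism `M ⊗̈ M → M`. -/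
def IsQTensorQCMon {S : QCSetting V ι} {M : Type*} [Monoid M] (𝒬 : QC S M) : Prop :=
  𝒬.IsSeminormal ∧
  ∃ ψ : QCHom (𝒬.qtensor 𝒬) 𝒬, ψ.toFun = Option.map (fun p => p.1 * p.2)

/-! ## The bicyclic monoid with zero `B₀` and the monoid `Z₀` -/

/-- The bicyclic monoid `⟨−, + | (+)(−) = ε⟩`: elements are normal forms `(−)^a(+)^b`. -/
structure Bic where
  neg : ℕ
  pos : ℕ
deriving DecidableEq

instance : Mul Bic :=
  ⟨fun x y => ⟨x.neg + (y.neg - x.pos), y.pos + (x.pos - y.neg)⟩⟩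

theorem Bic.mul_def (x y : Bic) :
    x * y = ⟨x.neg + (y.neg - x.pos), y.pos + (x.pos - y.neg)⟩ := rfl

instance : One Bic := ⟨⟨0, 0⟩⟩

theorem Bic.one_def : (1 : Bic) = ⟨0, 0⟩ := rfl

instance : Monoid Bic where
  mul_assoc x y z := by
    simp only [Bic.mul_def, Bic.mk.injEq]
    omega
  one_mul x := by
    simp only [Bic.one_def, Bic.mul_def]
    cases x
    simp only [Bic.mk.injEq]
    omega
  mul_one x := by
    simp only [Bic.one_def, Bic.mul_def]
    cases x
    simp only [Bic.mk.injEq]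
    omega

/-- The bicyclic monoid with a zero element adjoined,
`B₀ = ⟨0, −, + | (+)(−) = ε, 0x = x0 = 0⟩`. -/
abbrev B0 : Type := WithZero Bic

/-- The monoid `Z₀ = ⟨0, −, + | (+)(−) = 0, 0x = x0 = 0⟩`: the nonzero elements are the
normal forms `(−)^a(+)^b`. -/
inductive Z0 : Type
  | zero : Z0
  | word : ℕ → ℕ → Z0
deriving DecidableEq

instance : Mul Z0 :=
  ⟨fun x y => match x, y with
    | Z0.zero, _ => Z0.zero
    | _, Z0.zero => Z0.zero
    | Z0.word a b, Z0.word c d =>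
        if 0 < b ∧ 0 < c then Z0.zero else Z0.word (a + c) (b + d)⟩

instance : One Z0 := ⟨Z0.word 0 0⟩

instance : Zero Z0 := ⟨Z0.zero⟩

theorem Z0.one_def : (1 : Z0) = Z0.word 0 0 := rfl
theorem Z0.zero_def : (0 : Z0) = Z0.zero := rfl
theorem Z0.zero_mul' (x : Z0) : Z0.zero * x = Z0.zero := by cases x <;> rfl
theorem Z0.mul_zero' (x : Z0) : x * Z0.zero = Z0.zero := by cases x <;> rfl
theorem Z0.word_mul_word (a b c d : ℕ) :
    Z0.word a b * Z0.word c d =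
      if 0 < b ∧ 0 < c then Z0.zero else Z0.word (a + c) (b + d) := rfl

instance : MonoidWithZero Z0 where
  mul_assoc x y z := by
    cases x <;> cases y <;> cases z <;>
      simp only [Z0.zero_mul', Z0.mul_zero', Z0.word_mul_word]
    · split_ifs <;> simp_all [Z0.zero_mul', Z0.mul_zero', Z0.word_mul_word] <;>
        split_ifs <;> simp_all <;> omega
  one_mul x := by
    cases x
    · rfl
    · simp [Z0.one_def, Z0.word_mul_word]
  mul_one x := by
    cases x
    · rfl
    · simp [Z0.one_def, Z0.word_mul_word]
  zero_mul x := by cases x <;> rfl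
  mul_zero x := by cases x <;> rfl

/-! ## Signature maps -/

/-- The `i`-signature map for the tensor product `⊗`:
`sgn_i^⊗(w) = 0` if `ε̈_i(w) = +∞`, and `(−)^{ε̈_i(w)}(+)^{φ̈_i(w)}` otherwise. -/
def tsgn {V : Type*} [NormedAddCommGroup V] [InnerProductSpace ℝ V] {ι : Type*}
    {S : QCSetting V ι} {Q : Type*} (𝒬 : QC S Q) (i : ι) (w : FreeMonoid Q) : B0 :=
  if freeEps 𝒬 i (FreeMonoid.toList w) = ⊤ then 0
  else ↑(Bic.mk (WithTop.untopD 0 (freeEps 𝒬 i (FreeMonoid.toList w))).toNat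
      (WithTop.untopD 0 (freePhi 𝒬 i (FreeMonoid.toList w))).toNat)

/-- The `i`-signature map for the quasi-tensor product `⊗̈`:
`sgn_i^⊗̈(w) = 0` if `ε̈_i(w) = +∞`, and `(−)^{ε̈_i(w)}(+)^{φ̈_i(w)}` otherwise. -/
def qsgn {V : Type*} [NormedAddCommGroup V] [InnerProductSpace ℝ V] {ι : Type*}
    {S : QCSetting V ι} {Q : Type*} (𝒬 : QC S Q) (i : ι) (w : FreeMonoid Q) : Z0 :=
  if qfreeEps 𝒬 i (FreeMonoid.toList w) = ⊤ then 0
  else Z0.word (WithTop.untopD 0 (qfreeEps 𝒬 i (FreeMonoid.toList w))).toNat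
      (WithTop.untopD 0 (qfreePhi 𝒬 i (FreeMonoid.toList w))).toNat

end

/-! On a word `x · w` the structure maps of `F^⊗(Q)` are, by definition, those of the tensor
product `Q ⊗ F^⊗(Q)` at `(x, w)`. Seminormality can be checked one element and one direction
at a time once the maximal-string conditions are replaced by their local form
(`IsSeminormalAt`), and this pointwise form is preserved by `⊗`; so it passes from the letters
to all words by induction on the length. The product rules for `u · v` then follow by induction
on `u` from the associativity of `⊗`, which holds at `((a, b), c)` as soon as
`φ̈_i(b) = ε̈_i(b) + ⟨wt b, α_i^∨⟩`. -/

namespace QCSetting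

variable (S : QCSetting V ι)

theorem pair_add (v w : S.Λ) (i : ι) : S.pair (v + w) i = S.pair v i + S.pair w i := by
  have h : ((S.pair (v + w) i : ℤ) : ℝ) = S.pair v i + S.pair w i := by
    rw [S.pair_spec, S.pair_spec, S.pair_spec, AddSubgroup.coe_add, inner_add_left]
    ring
  exact_mod_cast h

theorem pair_zero (i : ι) : S.pair 0 i = 0 := by
  have h := S.pair_add 0 0 i
  rw [add_zero] at h
  omega

theorem pair_eq_add_two {v w : S.Λ} {i : ι} (h : (w : V) = v + S.simple i) :
    S.pair w i = S.pair v i + 2 := by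
  have hα : inner ℝ (S.simple i) (S.simple i) ≠ 0 :=
    inner_self_ne_zero.mpr fun h0 => S.zero_not_mem (h0 ▸ S.simple_mem i)
  have h2 : ((S.pair w i : ℤ) : ℝ) = S.pair v i + 2 := by
    rw [S.pair_spec, S.pair_spec, h, inner_add_left]
    field_simp
  exact_mod_cast h2

end QCSetting

namespace WithTop

theorem exists_eq_coe_of_add_eq_coe {x : WithTop ℤ} {c m : ℤ} (h : x + c = m) :
    ∃ k : ℤ, x = k ∧ k + c = m := by
  induction x using WithTop.recTopCoe with
  | top => simp at h
  | coe k => exact ⟨k, rfl, by exact_mod_cast h⟩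

theorem exists_nat_eq_of_nonneg {x : WithTop ℤ} (h0 : 0 ≤ x) (h : x ≠ ⊤) :
    ∃ n : ℕ, x = ((n : ℤ) : WithTop ℤ) := by
  induction x using WithTop.recTopCoe with
  | top => exact absurd rfl h
  | coe k => exact ⟨k.toNat, by norm_cast at h0 ⊢; omega⟩

theorem add_coe_neg_le_iff {x y : WithTop ℤ} {p : ℤ} :
    x + ((-p : ℤ) : WithTop ℤ) ≤ y ↔ x ≤ y + (p : WithTop ℤ) := by
  induction x using WithTop.recTopCoe with
  | top => simp
  | coe x =>
    induction y using WithTop.recTopCoe with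
    | top => simp
    | coe y => norm_cast; omega

theorem add_coe_neg_lt_iff {x y : WithTop ℤ} {p : ℤ} :
    x + ((-p : ℤ) : WithTop ℤ) < y ↔ x < y + (p : WithTop ℤ) := by
  induction x using WithTop.recTopCoe with
  | top => simp
  | coe x =>
    induction y using WithTop.recTopCoe with
    | top =>
      exact iff_of_true (add_lt_top.mpr ⟨coe_lt_top x, coe_lt_top _⟩)
        (by rw [top_add]; exact coe_lt_top x)
    | coe y => norm_cast; omega

end WithTop

theorem ite_le_max_ite_eq {α β : Type*} [LinearOrder α] (a b c : α) (x y z : β) :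
    (if c ≤ max a b then if b ≤ a then x else y else z) =
      if b ≤ a ∧ c ≤ a then x else if c ≤ b then y else z := by
  split_ifs <;> grind

theorem ite_lt_max_ite_eq {α β : Type*} [LinearOrder α] (a b c : α) (x y z : β) :
    (if c < max a b then if b < a then x else y else z) =
      if b < a ∧ c < a then x else if c < b then y else z := by
  split_ifs <;> grind

section OptIter

variable {A : Type*} {g : A → Option A}

theorem optIter_succ (g : A → Option A) (k : ℕ) (x : A) :
    optIter g (k + 1) x = (g x).bind (optIter g k) := by
  rw [optIter, Function.iterate_succ_apply, Option.bind_some]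
  cases g x with
  | some y => rfl
  | none =>
    induction k with
    | zero => rfl
    | succ k ih => rwa [Function.iterate_succ_apply]

theorem isSome_of_isSome_optIter {k : ℕ} {x : A} (h : (optIter g (k + 1) x).isSome) :
    (g x).isSome := by
  rw [optIter_succ] at h
  cases hx : g x <;> simp_all

theorem isGreatest_optIter_iff_isSome {x : A} {n : ℕ}
    (hn : IsGreatest {k | (optIter g k x).isSome} n) : (g x).isSome ↔ 0 < n := by
  refine ⟨fun hx => hn.2 (by simpa [optIter_succ, optIter] using hx), fun hpos => ?_⟩
  obtain ⟨k, rfl⟩ := Nat.exists_eq_add_of_lt hpos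
  exact isSome_of_isSome_optIter (by simpa using hn.1)

theorem eq_add_one_of_isGreatest_optIter {x y : A} {n m : ℕ} (hxy : g x = some y)
    (hn : IsGreatest {k | (optIter g k x).isSome} n)
    (hm : IsGreatest {k | (optIter g k y).isSome} m) : n = m + 1 := by
  have hshift : ∀ k, optIter g (k + 1) x = optIter g k y := by
    intro k
    rw [optIter_succ, hxy, Option.bind_some]
  obtain ⟨k, rfl⟩ : ∃ k, n = k + 1 :=
    Nat.exists_eq_succ_of_ne_zero ((isGreatest_optIter_iff_isSome hn).mp (by simp [hxy])).ne'
  have h1 : m + 1 ≤ k + 1 := hn.2 (show (optIter g (m + 1) x).isSome by rw [hshift]; exact hm.1)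
  have h2 : k ≤ m := hm.2 (show (optIter g k y).isSome by rw [← hshift]; exact hn.1)
  omega

theorem isGreatest_optIter {μ : A → WithTop ℤ} (hstep : ∀ a b, g a = some b → μ b + 1 = μ a)
    (hsome : ∀ a, μ a ≠ ⊤ → ((g a).isSome ↔ 0 < μ a)) (n : ℕ) {a : A}
    (ha : μ a = ((n : ℤ) : WithTop ℤ)) : IsGreatest {k | (optIter g k a).isSome} n := by
  induction n generalizing a with
  | zero =>
    have hga : g a = none := by
      simpa [ha] using (hsome a (by simp [ha])).not.mpr (by simp [ha])
    refine ⟨rfl, fun k hk => ?_⟩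
    cases k with
    | zero => exact le_rfl
    | succ k => simp [optIter_succ, hga] at hk
  | succ n ih =>
    obtain ⟨b, hb⟩ := Option.isSome_iff_exists.mp
      ((hsome a (by simp [ha])).mpr (by rw [ha]; exact_mod_cast n.succ_pos))
    have hμb : μ b = ((n : ℤ) : WithTop ℤ) := by
      obtain ⟨k, hk, hk1⟩ := WithTop.exists_eq_coe_of_add_eq_coe ((hstep a b hb).trans ha)
      rw [hk]
      congr 1
      omega
    have hshift : ∀ k, optIter g (k + 1) a = optIter g k b := by
      intro k
      rw [optIter_succ, hb, Option.bind_some]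
    refine ⟨show (optIter g (n + 1) a).isSome by rw [hshift]; exact (ih hμb).1,
      fun k hk => ?_⟩
    cases k with
    | zero => omega
    | succ k =>
      have : (optIter g k b).isSome := by rw [← hshift]; exact hk
      exact Nat.succ_le_succ ((ih hμb).2 this)

end OptIter

namespace QC

variable {S : QCSetting V ι} {Q A B C : Type*}

/-- Seminormality at `x` in direction `i`, with the maximal-string conditions on `ε̈_i x` and
`φ̈_i x` replaced by their local form: how `ε̈_i`, `φ̈_i` and `wt` change along `ë_i` and `f̈_i`. -/
structure IsSeminormalAt (𝒬 : QC S Q) (i : ι) (x : Q) : Prop where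
  φ_eq : 𝒬.φ i x = 𝒬.ε i x + ((S.pair (𝒬.wt x) i : ℤ) : WithTop ℤ)
  ε_nonneg : 0 ≤ 𝒬.ε i x
  φ_nonneg : 0 ≤ 𝒬.φ i x
  e_eq_none : 𝒬.ε i x = ⊤ → 𝒬.e i x = none
  f_eq_none : 𝒬.ε i x = ⊤ → 𝒬.f i x = none
  isSome_e : 𝒬.ε i x ≠ ⊤ → ((𝒬.e i x).isSome ↔ 0 < 𝒬.ε i x)
  isSome_f : 𝒬.ε i x ≠ ⊤ → ((𝒬.f i x).isSome ↔ 0 < 𝒬.φ i x)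
  e_eq_some : ∀ y, 𝒬.e i x = some y → 𝒬.f i y = some x ∧ 𝒬.ε i y + 1 = 𝒬.ε i x ∧
    𝒬.φ i y = 𝒬.φ i x + 1 ∧ (𝒬.wt y : V) = 𝒬.wt x + S.simple i
  f_eq_some : ∀ y, 𝒬.f i x = some y → 𝒬.e i y = some x ∧ 𝒬.ε i x + 1 = 𝒬.ε i y ∧
    𝒬.φ i y + 1 = 𝒬.φ i x ∧ (𝒬.wt y : V) = 𝒬.wt x - S.simple i

theorem IsSeminormalAt.φ_eq_top_iff {𝒬 : QC S Q} {i : ι} {x : Q}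
    (hx : 𝒬.IsSeminormalAt i x) : 𝒬.φ i x = ⊤ ↔ 𝒬.ε i x = ⊤ := by
  rw [hx.φ_eq, WithTop.add_eq_top]
  simp

theorem IsSeminormalAt.of_ε_eq_top {𝒬 : QC S Q} {i : ι} {x : Q} (hε : 𝒬.ε i x = ⊤)
    (hφ : 𝒬.φ i x = ⊤) (he : 𝒬.e i x = none) (hf : 𝒬.f i x = none) :
    𝒬.IsSeminormalAt i x where
  φ_eq := by rw [hε, hφ, top_add]
  ε_nonneg := hε ▸ le_top
  φ_nonneg := hφ ▸ le_top
  e_eq_none _ := he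
  f_eq_none _ := hf
  isSome_e h := absurd hε h
  isSome_f h := absurd hε h
  e_eq_some y hy := by simp [he] at hy
  f_eq_some y hy := by simp [hf] at hy

theorem IsSeminormalAt.φ_eq_coe {𝒬 : QC S Q} {i : ι} {x : Q} {m : ℤ} (hx : 𝒬.IsSeminormalAt i x)
    (hm : 𝒬.ε i x = m) : 𝒬.φ i x = ((m + S.pair (𝒬.wt x) i : ℤ) : WithTop ℤ) := by
  rw [hx.φ_eq, hm, WithTop.coe_add]

theorem IsSeminormal.e_eq_some_spec {𝒬 : QC S Q} (h : 𝒬.IsSeminormal) {i : ι} {x y : Q}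
    (hxy : 𝒬.e i x = some y) :
    𝒬.f i y = some x ∧ 𝒬.ε i y + 1 = 𝒬.ε i x ∧ 𝒬.φ i y = 𝒬.φ i x + 1 ∧
      (𝒬.wt y : V) = 𝒬.wt x + S.simple i := by
  have hyx : 𝒬.f i y = some x := (h.e_iff_f i x y).mp hxy
  have hx : 𝒬.ε i x ≠ ⊤ := fun hx => by simp [h.e_of_top i x hx] at hxy
  have hy : 𝒬.ε i y ≠ ⊤ := fun hy => by simp [h.f_of_top i y hy] at hyx
  obtain ⟨n, hn, hgn⟩ := h.eps_spec i x hx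
  obtain ⟨m, hm, hgm⟩ := h.eps_spec i y hy
  obtain ⟨n', hn', hgn'⟩ := h.phi_spec i x hx
  obtain ⟨m', hm', hgm'⟩ := h.phi_spec i y hy
  have hε := eq_add_one_of_isGreatest_optIter hxy hgn hgm
  have hφ := eq_add_one_of_isGreatest_optIter hyx hgm' hgn'
  refine ⟨hyx, ?_, ?_, h.wt_e i x y hxy⟩
  · rw [hn, hm, hε]
    rfl
  · rw [hn', hm', hφ]
    rfl

theorem IsSeminormal.isSeminormalAt {𝒬 : QC S Q} (h : 𝒬.IsSeminormal) (i : ι) (x : Q) :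
    𝒬.IsSeminormalAt i x where
  φ_eq := h.phi_eq i x
  ε_nonneg := by
    by_cases hx : 𝒬.ε i x = ⊤
    · exact hx ▸ le_top
    · obtain ⟨n, hn, -⟩ := h.eps_spec i x hx
      rw [hn]
      exact_mod_cast n.cast_nonneg
  φ_nonneg := by
    by_cases hx : 𝒬.ε i x = ⊤
    · rw [h.phi_eq, hx, top_add]
      exact le_top
    · obtain ⟨n, hn, -⟩ := h.phi_spec i x hx
      rw [hn]
      exact_mod_cast n.cast_nonneg
  e_eq_none := h.e_of_top i x
  f_eq_none := h.f_of_top i x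
  isSome_e hx := by
    obtain ⟨n, hn, hg⟩ := h.eps_spec i x hx
    rw [isGreatest_optIter_iff_isSome hg, hn]
    norm_cast
  isSome_f hx := by
    obtain ⟨n, hn, hg⟩ := h.phi_spec i x hx
    rw [isGreatest_optIter_iff_isSome hg, hn]
    norm_cast
  e_eq_some _ := h.e_eq_some_spec
  f_eq_some y hxy := by
    obtain ⟨-, hε, hφ, -⟩ := h.e_eq_some_spec ((h.e_iff_f i y x).mpr hxy)
    exact ⟨(h.e_iff_f i y x).mpr hxy, hε, hφ.symm, h.wt_f i x y hxy⟩

theorem isSeminormal_iff_forall_isSeminormalAt {𝒬 : QC S Q} :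
    𝒬.IsSeminormal ↔ ∀ i x, 𝒬.IsSeminormalAt i x := by
  refine ⟨fun h => h.isSeminormalAt, fun H => ?_⟩
  refine
    { phi_eq := fun i x => (H i x).φ_eq
      wt_e := fun i x y hxy => ((H i x).e_eq_some y hxy).2.2.2
      wt_f := fun i x y hxy => ((H i x).f_eq_some y hxy).2.2.2
      e_iff_f := fun i x y =>
        ⟨fun hxy => ((H i x).e_eq_some y hxy).1, fun hyx => ((H i y).f_eq_some x hyx).1⟩
      e_of_top := fun i x => (H i x).e_eq_none
      f_of_top := fun i x => (H i x).f_eq_none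
      eps_spec := fun i x hx => ?_
      phi_spec := fun i x hx => ?_ }
  · obtain ⟨n, hn⟩ := WithTop.exists_nat_eq_of_nonneg (H i x).ε_nonneg hx
    exact ⟨n, hn, isGreatest_optIter (fun a b hab => ((H i a).e_eq_some b hab).2.1)
      (fun a => (H i a).isSome_e) n hn⟩
  · obtain ⟨n, hn⟩ := WithTop.exists_nat_eq_of_nonneg (H i x).φ_nonneg
      (mt (H i x).φ_eq_top_iff.mp hx)
    exact ⟨n, hn, isGreatest_optIter (fun a b hab => ((H i a).f_eq_some b hab).2.2.1)
      (fun a ha => (H i a).isSome_f (mt (H i a).φ_eq_top_iff.mpr ha)) n hn⟩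

structure IsStrictAt (𝒜 : QC S A) (ℬ : QC S B) (g : A → B) (a : A) : Prop where
  wt : ℬ.wt (g a) = 𝒜.wt a
  ε : ∀ i, ℬ.ε i (g a) = 𝒜.ε i a
  φ : ∀ i, ℬ.φ i (g a) = 𝒜.φ i a
  e : ∀ i, ℬ.e i (g a) = (𝒜.e i a).map g
  f : ∀ i, ℬ.f i (g a) = (𝒜.f i a).map g

namespace IsStrictAt

variable {𝒜 : QC S A} {ℬ : QC S B} {𝒞 : QC S C} {g : A → B} {h : B → C} {a : A}

theorem comp (hg : IsStrictAt 𝒜 ℬ g a) (hh : IsStrictAt ℬ 𝒞 h (g a)) :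
    IsStrictAt 𝒜 𝒞 (h ∘ g) a where
  wt := hh.wt.trans hg.wt
  ε i := (hh.ε i).trans (hg.ε i)
  φ i := (hh.φ i).trans (hg.φ i)
  e i := by rw [Function.comp_apply, hh.e, hg.e, Option.map_map]
  f i := by rw [Function.comp_apply, hh.f, hg.f, Option.map_map]

theorem of_comp (hg : IsStrictAt 𝒜 ℬ g a) (hhg : IsStrictAt 𝒜 𝒞 (h ∘ g) a) :
    IsStrictAt ℬ 𝒞 h (g a) where
  wt := hhg.wt.trans hg.wt.symm
  ε i := (hhg.ε i).trans (hg.ε i).symm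
  φ i := (hhg.φ i).trans (hg.φ i).symm
  e i := by rw [hg.e, Option.map_map]; exact hhg.e i
  f i := by rw [hg.f, Option.map_map]; exact hhg.f i

theorem tensor_right (hg : IsStrictAt 𝒜 ℬ g a) (𝒬 : QC S Q) (x : Q) :
    IsStrictAt (𝒬.tensor 𝒜) (𝒬.tensor ℬ) (Prod.map id g) (x, a) where
  wt := by simp only [tensor, Prod.map_fst, Prod.map_snd, id, hg.wt]
  ε i := by simp only [tensor, Prod.map_fst, Prod.map_snd, id, hg.ε]
  φ i := by simp only [tensor, Prod.map_fst, Prod.map_snd, id, hg.φ, hg.wt]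
  e i := by
    simp only [tensor, Prod.map_fst, Prod.map_snd, id, hg.ε, hg.e]
    split_ifs <;> simp only [Option.map_map] <;> rfl
  f i := by
    simp only [tensor, Prod.map_fst, Prod.map_snd, id, hg.ε, hg.f]
    split_ifs <;> simp only [Option.map_map] <;> rfl

theorem tensor_left (hg : IsStrictAt 𝒜 ℬ g a) (𝒬 : QC S Q) (x : Q) :
    IsStrictAt (𝒜.tensor 𝒬) (ℬ.tensor 𝒬) (Prod.map g id) (a, x) where
  wt := by simp only [tensor, Prod.map_fst, Prod.map_snd, id, hg.wt]
  ε i := by simp only [tensor, Prod.map_fst, Prod.map_snd, id, hg.ε, hg.wt]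
  φ i := by simp only [tensor, Prod.map_fst, Prod.map_snd, id, hg.φ]
  e i := by
    simp only [tensor, Prod.map_fst, Prod.map_snd, id, hg.φ, hg.e]
    split_ifs <;> simp only [Option.map_map] <;> rfl
  f i := by
    simp only [tensor, Prod.map_fst, Prod.map_snd, id, hg.φ, hg.f]
    split_ifs <;> simp only [Option.map_map] <;> rfl

end IsStrictAt

theorem isStrictAt_prodAssoc (𝒜 : QC S A) (ℬ : QC S B) (𝒞 : QC S C) {a : A} {b : B} {c : C}
    (hb : ∀ i, ℬ.φ i b = ℬ.ε i b + ((S.pair (ℬ.wt b) i : ℤ) : WithTop ℤ)) :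
    IsStrictAt ((𝒜.tensor ℬ).tensor 𝒞) (𝒜.tensor (ℬ.tensor 𝒞)) (Equiv.prodAssoc A B C)
      ((a, b), c) where
  wt := by
    simp only [tensor, Equiv.prodAssoc_apply]
    exact (add_assoc _ _ _).symm
  ε i := by
    simp only [tensor, Equiv.prodAssoc_apply, S.pair_add]
    rw [← max_add_add_right, ← max_assoc, add_assoc, ← WithTop.coe_add, neg_add_rev]
  φ i := by
    simp only [tensor, Equiv.prodAssoc_apply, S.pair_add]
    rw [← max_add_add_right, max_assoc, add_assoc, ← WithTop.coe_add]
  -- both sides branch on comparisons of `ε̈_i c`, `φ̈_i a + ⟨wt b, α_i^∨⟩` and `φ̈_i b`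
  e i := by
    have hshift : ℬ.ε i b ≤ 𝒜.φ i a ↔
        ℬ.ε i b + S.pair (ℬ.wt b) i ≤ 𝒜.φ i a + S.pair (ℬ.wt b) i :=
      (WithTop.add_le_add_iff_right WithTop.coe_ne_top).symm
    have hmax : max (ℬ.ε i b) (𝒞.ε i c + ((-S.pair (ℬ.wt b) i : ℤ) : WithTop ℤ)) ≤ 𝒜.φ i a ↔
        ℬ.ε i b + S.pair (ℬ.wt b) i ≤ 𝒜.φ i a + S.pair (ℬ.wt b) i ∧
          𝒞.ε i c ≤ 𝒜.φ i a + S.pair (ℬ.wt b) i := by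
      rw [max_le_iff, WithTop.add_coe_neg_le_iff, hshift]
    simp only [tensor, Equiv.prodAssoc_apply, hb, hmax, hshift, apply_ite (Option.map _),
      Option.map_map]
    rw [ite_le_max_ite_eq]
    rfl
  f i := by
    have hshift : ℬ.ε i b < 𝒜.φ i a ↔
        ℬ.ε i b + S.pair (ℬ.wt b) i < 𝒜.φ i a + S.pair (ℬ.wt b) i :=
      (WithTop.add_lt_add_iff_right WithTop.coe_ne_top).symm
    have hmax : max (ℬ.ε i b) (𝒞.ε i c + ((-S.pair (ℬ.wt b) i : ℤ) : WithTop ℤ)) < 𝒜.φ i a ↔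
        ℬ.ε i b + S.pair (ℬ.wt b) i < 𝒜.φ i a + S.pair (ℬ.wt b) i ∧
          𝒞.ε i c < 𝒜.φ i a + S.pair (ℬ.wt b) i := by
      rw [max_lt_iff, WithTop.add_coe_neg_lt_iff, hshift]
    simp only [tensor, Equiv.prodAssoc_apply, hb, hmax, hshift, apply_ite (Option.map _),
      Option.map_map]
    rw [ite_lt_max_ite_eq]
    rfl

theorem IsSeminormalAt.map {𝒜 : QC S A} {ℬ : QC S B} {g : A → B} (hg : ∀ a, IsStrictAt 𝒜 ℬ g a)
    {i : ι} {a : A} (ha : 𝒜.IsSeminormalAt i a) : ℬ.IsSeminormalAt i (g a) where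
  φ_eq := by rw [(hg a).φ, (hg a).ε, (hg a).wt]; exact ha.φ_eq
  ε_nonneg := (hg a).ε i ▸ ha.ε_nonneg
  φ_nonneg := (hg a).φ i ▸ ha.φ_nonneg
  e_eq_none h := by rw [(hg a).e, ha.e_eq_none ((hg a).ε i ▸ h), Option.map_none]
  f_eq_none h := by rw [(hg a).f, ha.f_eq_none ((hg a).ε i ▸ h), Option.map_none]
  isSome_e h := by rw [(hg a).e, Option.isSome_map, (hg a).ε]; exact ha.isSome_e ((hg a).ε i ▸ h)
  isSome_f h := by rw [(hg a).f, Option.isSome_map, (hg a).φ]; exact ha.isSome_f ((hg a).ε i ▸ h)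
  e_eq_some y hy := by
    rw [(hg a).e] at hy
    obtain ⟨a', ha', rfl⟩ := Option.map_eq_some_iff.mp hy
    obtain ⟨hf, hε, hφ, hwt⟩ := ha.e_eq_some a' ha'
    rw [(hg a').f, hf, (hg a').ε, (hg a).ε, (hg a').φ, (hg a).φ, (hg a').wt, (hg a).wt]
    exact ⟨rfl, hε, hφ, hwt⟩
  f_eq_some y hy := by
    rw [(hg a).f] at hy
    obtain ⟨a', ha', rfl⟩ := Option.map_eq_some_iff.mp hy
    obtain ⟨he, hε, hφ, hwt⟩ := ha.f_eq_some a' ha'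
    rw [(hg a').e, he, (hg a').ε, (hg a).ε, (hg a').φ, (hg a).φ, (hg a').wt, (hg a).wt]
    exact ⟨rfl, hε, hφ, hwt⟩

section Tensor

variable {𝒜 : QC S A} {ℬ : QC S B} {i : ι} {a : A} {b : B}

theorem IsSeminormalAt.tensor_e_eq_some (ha : 𝒜.IsSeminormalAt i a) (hb : ℬ.IsSeminormalAt i b)
    {m n : ℤ} (hm : 𝒜.ε i a = m) (hn : ℬ.ε i b = n) (y : A × B)
    (hy : (𝒜.tensor ℬ).e i (a, b) = some y) :
    (𝒜.tensor ℬ).f i y = some (a, b) ∧ (𝒜.tensor ℬ).ε i y + 1 = (𝒜.tensor ℬ).ε i (a, b) ∧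
      (𝒜.tensor ℬ).φ i y = (𝒜.tensor ℬ).φ i (a, b) + 1 ∧
      ((𝒜.tensor ℬ).wt y : V) = (𝒜.tensor ℬ).wt (a, b) + S.simple i := by
  have hφa := ha.φ_eq_coe hm
  have hφb := hb.φ_eq_coe hn
  simp only [tensor, hn, hφa] at hy
  split_ifs at hy with hc
  · obtain ⟨a', ha', rfl⟩ := Option.map_eq_some_iff.mp hy
    obtain ⟨hf', hε', hφ', hwt'⟩ := ha.e_eq_some a' ha'
    obtain ⟨m', hm', hmm⟩ := WithTop.exists_eq_coe_of_add_eq_coe (hε'.trans hm)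
    have hp' := S.pair_eq_add_two hwt'
    simp only [tensor, hm', hm, hn, hφ', hφa, hφb, hp', hf']
    norm_cast at hc ⊢
    refine ⟨by rw [if_pos (by omega)]; rfl, by omega, by omega, by push_cast; rw [hwt']; abel⟩
  · obtain ⟨b', hb', rfl⟩ := Option.map_eq_some_iff.mp hy
    obtain ⟨hf', hε', hφ', hwt'⟩ := hb.e_eq_some b' hb'
    obtain ⟨n', hn', hnn⟩ := WithTop.exists_eq_coe_of_add_eq_coe (hε'.trans hn)
    have hp' := S.pair_eq_add_two hwt'
    simp only [tensor, hn', hm, hn, hφ', hφa, hφb, hp', hf']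
    norm_cast at hc ⊢
    refine ⟨by rw [if_neg (by omega)]; rfl, by omega, by omega, by push_cast; rw [hwt']; abel⟩

theorem IsSeminormalAt.tensor_f_eq_some (ha : 𝒜.IsSeminormalAt i a) (hb : ℬ.IsSeminormalAt i b)
    {m n : ℤ} (hm : 𝒜.ε i a = m) (hn : ℬ.ε i b = n) (y : A × B)
    (hy : (𝒜.tensor ℬ).f i (a, b) = some y) :
    (𝒜.tensor ℬ).e i y = some (a, b) ∧ (𝒜.tensor ℬ).ε i (a, b) + 1 = (𝒜.tensor ℬ).ε i y ∧
      (𝒜.tensor ℬ).φ i y + 1 = (𝒜.tensor ℬ).φ i (a, b) ∧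
      ((𝒜.tensor ℬ).wt y : V) = (𝒜.tensor ℬ).wt (a, b) - S.simple i := by
  have hφa := ha.φ_eq_coe hm
  have hφb := hb.φ_eq_coe hn
  simp only [tensor, hn, hφa] at hy
  split_ifs at hy with hc
  · obtain ⟨a', ha', rfl⟩ := Option.map_eq_some_iff.mp hy
    obtain ⟨he', hε', hφ', hwt'⟩ := ha.f_eq_some a' ha'
    obtain ⟨k, hk, hkk⟩ := WithTop.exists_eq_coe_of_add_eq_coe (hφ'.trans hφa)
    have hm' : 𝒜.ε i a' = ((m + 1 : ℤ) : WithTop ℤ) := by rw [← hε', hm]; rfl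
    have hp' := S.pair_eq_add_two (show (𝒜.wt a : V) = 𝒜.wt a' + S.simple i by rw [hwt']; abel)
    simp only [tensor, hm', hm, hn, hk, hφa, hφb, hp', he']
    norm_cast at hc ⊢
    refine ⟨by rw [if_pos (by omega)]; rfl, by omega, by omega, by push_cast; rw [hwt']; abel⟩
  · obtain ⟨b', hb', rfl⟩ := Option.map_eq_some_iff.mp hy
    obtain ⟨he', hε', hφ', hwt'⟩ := hb.f_eq_some b' hb'
    obtain ⟨k, hk, hkk⟩ := WithTop.exists_eq_coe_of_add_eq_coe (hφ'.trans hφb)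
    have hn' : ℬ.ε i b' = ((n + 1 : ℤ) : WithTop ℤ) := by rw [← hε', hn]; rfl
    have hp' := S.pair_eq_add_two (show (ℬ.wt b : V) = ℬ.wt b' + S.simple i by rw [hwt']; abel)
    simp only [tensor, hn', hm, hn, hk, hφa, hφb, hp', he']
    norm_cast at hc ⊢
    refine ⟨by rw [if_neg (by omega)]; rfl, by omega, by omega, by push_cast; rw [hwt']; abel⟩

theorem IsSeminormalAt.tensor_of_ε_eq_top (ha : 𝒜.IsSeminormalAt i a)
    (hb : ℬ.IsSeminormalAt i b) (htop : 𝒜.ε i a = ⊤ ∨ ℬ.ε i b = ⊤) :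
    (𝒜.tensor ℬ).IsSeminormalAt i (a, b) := by
  rcases htop with ha' | hb'
  · have hφa' := ha.φ_eq_top_iff.mpr ha'
    refine .of_ε_eq_top ?_ ?_ ?_ ?_
    · simp [tensor, ha']
    · simp [tensor, hφa']
    · simp [tensor, hφa', ha.e_eq_none ha']
    · simp only [tensor, hφa', lt_top_iff_ne_top, ite_not]
      split_ifs with hb'
      · simp [hb.f_eq_none hb']
      · simp [ha.f_eq_none ha']
  · have hφb' := hb.φ_eq_top_iff.mpr hb'
    refine .of_ε_eq_top ?_ ?_ ?_ ?_
    · simp [tensor, hb']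
    · simp [tensor, hφb']
    · simp only [tensor, hb', top_le_iff, ha.φ_eq_top_iff]
      split_ifs with ha'
      · simp [ha.e_eq_none ha']
      · simp [hb.e_eq_none hb']
    · simp [tensor, hb', hb.f_eq_none hb']

theorem IsSeminormalAt.tensor (ha : 𝒜.IsSeminormalAt i a) (hb : ℬ.IsSeminormalAt i b) :
    (𝒜.tensor ℬ).IsSeminormalAt i (a, b) := by
  by_cases htop : 𝒜.ε i a = ⊤ ∨ ℬ.ε i b = ⊤
  · exact ha.tensor_of_ε_eq_top hb htop
  obtain ⟨m, hm⟩ := WithTop.ne_top_iff_exists.mp (not_or.mp htop).1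
  obtain ⟨n, hn⟩ := WithTop.ne_top_iff_exists.mp (not_or.mp htop).2
  have hφa := ha.φ_eq_coe hm.symm
  have hφb := hb.φ_eq_coe hn.symm
  have hm0 : 0 ≤ m := by exact_mod_cast hm ▸ ha.ε_nonneg
  have hn0 : 0 ≤ n := by exact_mod_cast hn ▸ hb.ε_nonneg
  have hφa0 : 0 ≤ m + S.pair (𝒜.wt a) i := by exact_mod_cast hφa ▸ ha.φ_nonneg
  have hφb0 : 0 ≤ n + S.pair (ℬ.wt b) i := by exact_mod_cast hφb ▸ hb.φ_nonneg
  constructor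
  case φ_eq =>
    simp only [QC.tensor, ← hm, ← hn, hφa, hφb, S.pair_add]
    norm_cast
    omega
  case ε_nonneg =>
    simp only [QC.tensor, ← hm, ← hn]
    norm_cast
    omega
  case φ_nonneg =>
    simp only [QC.tensor, hφa, hφb]
    norm_cast
    omega
  case e_eq_none => exact fun h => by simp [QC.tensor, ← hm, ← hn] at h
  case f_eq_none => exact fun h => by simp [QC.tensor, ← hm, ← hn] at h
  case isSome_e =>
    intro _
    simp only [QC.tensor, ← hm, ← hn, hφa]
    split_ifs with hc
    · rw [Option.isSome_map, ha.isSome_e (hm ▸ WithTop.coe_ne_top), ← hm]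
      norm_cast at hc ⊢
      omega
    · rw [Option.isSome_map, hb.isSome_e (hn ▸ WithTop.coe_ne_top), ← hn]
      norm_cast at hc ⊢
      omega
  case isSome_f =>
    intro _
    simp only [QC.tensor, ← hn, hφa, hφb]
    split_ifs with hc
    · rw [Option.isSome_map, ha.isSome_f (hm ▸ WithTop.coe_ne_top), hφa]
      norm_cast at hc ⊢
      omega
    · rw [Option.isSome_map, hb.isSome_f (hn ▸ WithTop.coe_ne_top), hφb]
      norm_cast at hc ⊢
      omega
  case e_eq_some => exact ha.tensor_e_eq_some hb hm.symm hn.symm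
  case f_eq_some => exact ha.tensor_f_eq_some hb hm.symm hn.symm

end Tensor

end QC

theorem IsTensorQCMon.of_isStrictAt_mul {S : QCSetting V ι} {M : Type*} [Monoid M]
    {𝒬 : QC S M} (h : 𝒬.IsSeminormal)
    (hmul : ∀ x y, QC.IsStrictAt (𝒬.tensor 𝒬) 𝒬 (fun p => p.1 * p.2) (x, y)) :
    IsTensorQCMon 𝒬 where
  seminormal := h
  wt_mul x y := (hmul x y).wt
  eps_mul i x y := (hmul x y).ε i
  phi_mul i x y := (hmul x y).φ i
  e_mul i x y := by
    rw [(hmul x y).e]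
    simp only [QC.tensor, apply_ite (Option.map _), Option.map_map]
    rfl
  f_mul i x y := by
    rw [(hmul x y).f]
    simp only [QC.tensor, apply_ite (Option.map _), Option.map_map]
    rfl

section FreeTensor

variable {S : QCSetting V ι} {Q : Type*} (𝒬 : QC S Q)

theorem freeTensorQC_isStrictAt_cons (p : Q × FreeMonoid Q) :
    QC.IsStrictAt (𝒬.tensor (freeTensorQC 𝒬)) (freeTensorQC 𝒬)
      (fun p => FreeMonoid.of p.1 * p.2) p where
  wt := rfl
  ε _ := rfl
  φ _ := rfl
  e i := by
    simp only [freeTensorQC, QC.tensor, FreeMonoid.toList_of_mul, freeE,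
      apply_ite (Option.map _), Option.map_map]
    rfl
  f i := by
    simp only [freeTensorQC, QC.tensor, FreeMonoid.toList_of_mul, freeF,
      apply_ite (Option.map _), Option.map_map]
    rfl

theorem freeTensorQC_isSeminormalAt_one (i : ι) : (freeTensorQC 𝒬).IsSeminormalAt i 1 where
  φ_eq := by
    show (0 : WithTop ℤ) = 0 + ((S.pair 0 i : ℤ) : WithTop ℤ)
    rw [S.pair_zero, WithTop.coe_zero, add_zero]
  ε_nonneg := le_rfl
  φ_nonneg := le_rfl
  e_eq_none _ := rfl
  f_eq_none _ := rfl
  isSome_e _ := iff_of_false Bool.false_ne_true (lt_irrefl 0)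
  isSome_f _ := iff_of_false Bool.false_ne_true (lt_irrefl 0)
  e_eq_some y hy := (Option.some_ne_none y hy.symm).elim
  f_eq_some y hy := (Option.some_ne_none y hy.symm).elim

theorem freeTensorQC_isSeminormalAt (h : 𝒬.IsSeminormal) (i : ι) (w : FreeMonoid Q) :
    (freeTensorQC 𝒬).IsSeminormalAt i w := by
  induction w using FreeMonoid.inductionOn' with
  | one => exact freeTensorQC_isSeminormalAt_one 𝒬 i
  | of_mul x w ih => exact ((h.isSeminormalAt i x).tensor ih).map (freeTensorQC_isStrictAt_cons 𝒬)

theorem freeTensorQC_isStrictAt_one_mul {v : FreeMonoid Q}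
    (hv : ∀ i, (freeTensorQC 𝒬).IsSeminormalAt i v) :
    QC.IsStrictAt ((freeTensorQC 𝒬).tensor (freeTensorQC 𝒬)) (freeTensorQC 𝒬)
      (fun p => p.1 * p.2) (1, v) where
  wt := (zero_add _).symm
  ε i := by
    show _ = max 0 (_ + ((-S.pair 0 i : ℤ) : WithTop ℤ))
    rw [S.pair_zero, neg_zero, WithTop.coe_zero, add_zero, max_eq_right (hv i).ε_nonneg]
    rfl
  φ i := by
    show _ = max (0 + _) _
    rw [zero_add, max_eq_right ((hv i).φ_eq ▸ le_add_of_nonneg_left (hv i).ε_nonneg)]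
    rfl
  e i := by
    show _ = Option.map _ (if _ ≤ (0 : WithTop ℤ) then none else _)
    split_ifs with h0
    · have hε : (freeTensorQC 𝒬).ε i v = 0 := le_antisymm h0 (hv i).ε_nonneg
      have hnone :=
        ((hv i).isSome_e (hε ▸ WithTop.coe_ne_top)).not.mpr (by rw [hε]; exact lt_irrefl 0)
      exact Option.not_isSome_iff_eq_none.mp hnone
    · simp only [Option.map_map, Function.comp_def, one_mul, Option.map_id']
  f i := by
    show _ = Option.map _ (if _ < (0 : WithTop ℤ) then none else _)
    rw [if_neg (not_lt.mpr (hv i).ε_nonneg)]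
    simp only [Option.map_map, Function.comp_def, one_mul, Option.map_id']

theorem freeTensorQC_isStrictAt_mul (h : 𝒬.IsSeminormal) (u v : FreeMonoid Q) :
    QC.IsStrictAt ((freeTensorQC 𝒬).tensor (freeTensorQC 𝒬)) (freeTensorQC 𝒬)
      (fun p => p.1 * p.2) (u, v) := by
  induction u using FreeMonoid.inductionOn' generalizing v with
  | one => exact freeTensorQC_isStrictAt_one_mul 𝒬 (freeTensorQC_isSeminormalAt 𝒬 h · v)
  | of_mul x u ih =>
    have hassoc := QC.isStrictAt_prodAssoc 𝒬 (freeTensorQC 𝒬) (freeTensorQC 𝒬) (a := x) (c := v)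
      fun i => (freeTensorQC_isSeminormalAt 𝒬 h i u).φ_eq
    have hcomp := (hassoc.comp ((ih v).tensor_right 𝒬 x)).comp
      (freeTensorQC_isStrictAt_cons 𝒬 (x, u * v))
    have hmul_assoc : (fun p : FreeMonoid Q × FreeMonoid Q => p.1 * p.2) ∘
          Prod.map (fun p : Q × FreeMonoid Q => FreeMonoid.of p.1 * p.2) id =
        (fun p : Q × FreeMonoid Q => FreeMonoid.of p.1 * p.2) ∘
          Prod.map id (fun p : FreeMonoid Q × FreeMonoid Q => p.1 * p.2) ∘
            Equiv.prodAssoc _ _ _ :=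
      funext fun p => mul_assoc _ _ _
    exact ((freeTensorQC_isStrictAt_cons 𝒬 (x, u)).tensor_left _ v).of_comp (hmul_assoc ▸ hcomp)

theorem freeTensorQC_wt_ofList (l : List Q) :
    (freeTensorQC 𝒬).wt (FreeMonoid.ofList l) = (l.map 𝒬.wt).sum := by
  induction l with
  | nil => rfl
  | cons x l ih => exact congrArg (𝒬.wt x + ·) ih

end FreeTensor

/-- The free `⊗`-quasi-crystal monoid `F^⊗(Q)` over a seminormal
quasi-crystal `Q` is a `⊗`-quasi-crystal monoid of the same type; moreover its weight
map satisfies `wt(x₁x₂⋯x_m) = wt(x₁) + wt(x₂) + ⋯ + wt(x_m)` for letters `x₁, …, x_m`. -/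
theorem freeTensor_isTensorQCMon {V : Type*} [NormedAddCommGroup V]
    [InnerProductSpace ℝ V] {ι : Type*} {S : QCSetting V ι} {Q : Type*}
    (𝒬 : QC S Q) (h : 𝒬.IsSeminormal) :
    IsTensorQCMon (freeTensorQC 𝒬) ∧
    ∀ l : List Q, (freeTensorQC 𝒬).wt (FreeMonoid.ofList l) = (l.map 𝒬.wt).sum :=
  ⟨.of_isStrictAt_mul
      (QC.isSeminormal_iff_forall_isSeminormalAt.mpr (freeTensorQC_isSeminormalAt 𝒬 h))
      (freeTensorQC_isStrictAt_mul 𝒬 h),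
    freeTensorQC_wt_ofList 𝒬⟩
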